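/- arXiv:1306.0630 — 2 statements merged into one kernel-verified Lean document; each statement's English description precedes it below -/
import Mathlib

section
/- Let s ≥ 2, let n = s(s−1)/2, and identify the n input bits with the edges of the complete graph K_s on vertex set [s]. For i ∈ [s], let x^i ∈ {0,1}^n be the indicator of the star H_i consisting of all edges incident to vertex i. Define g : {0,1}^n → {0,1} by g(x) = 1 iff x = x^i for some i ∈ [s]. Then g(0^n) = 0, the fractional block sensitivity at the all-zeros input satisfies bs*_{0^n}(g) ≥ s/2, and for every a ∈ g^{-1}(0) the block sensitivity satisfies bs_a(g) ≤ 3 (i.e., bs_0(g) ≤ 3). -/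
open Filter

namespace BS

variable {I : Type*} [Fintype I] [DecidableEq I]

/-- Flip the bits of `x` indexed by `B`. -/
def flipSet (x : I → Bool) (B : Finset I) : I → Bool :=
  fun i => if i ∈ B then !(x i) else x i

/-- `B` is a block of `f` at `x`. -/
def IsBlock (f : (I → Bool) → Bool) (x : I → Bool) (B : Finset I) : Prop :=
  f (flipSet x B) ≠ f x

/-- Block sensitivity of `f` at `x`: the maximum number of pairwise disjoint blocks. -/
noncomputable def bsAt (f : (I → Bool) → Bool) (x : I → Bool) : ℕ :=
  sSup {k | ∃ B : Fin k → Finset I, (∀ t, IsBlock f x (B t)) ∧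
    ∀ t t', t ≠ t' → Disjoint (B t) (B t')}

/-- Block sensitivity of `f`. -/
noncomputable def bs (f : (I → Bool) → Bool) : ℕ :=
  sSup {k | ∃ x, k = bsAt f x}

/-- `b`-block sensitivity of `f`. -/
noncomputable def bsb (f : (I → Bool) → Bool) (b : Bool) : ℕ :=
  sSup {k | ∃ x, f x = b ∧ k = bsAt f x}

/-- `M`-fold block sensitivity of `f` at `x`. -/
noncomputable def bsMAt (f : (I → Bool) → Bool) (M : ℕ) (x : I → Bool) : ℕ :=
  sSup {k | ∃ B : Fin k → Finset I, (∀ t, IsBlock f x (B t)) ∧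
    ∀ i : I, (Finset.univ.filter (fun t => i ∈ B t)).card ≤ M}

/-- `M`-fold `b`-block sensitivity of `f`. -/
noncomputable def bsMb (f : (I → Bool) → Bool) (M : ℕ) (b : Bool) : ℕ :=
  sSup {k | ∃ x, f x = b ∧ k = bsMAt f M x}

/-- Fractional block sensitivity of `f` at `x`. -/
noncomputable def fbsAt (f : (I → Bool) → Bool) (x : I → Bool) : ℝ :=
  sSup {s | ∃ lam : Finset I → ℝ, (∀ B, 0 ≤ lam B) ∧
    (∀ B, ¬ IsBlock f x B → lam B = 0) ∧
    (∀ i : I, ∑ B ∈ Finset.univ.filter (fun B : Finset I => i ∈ B), lam B ≤ 1) ∧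
    s = ∑ B : Finset I, lam B}

/-- Fractional block sensitivity of `f`. -/
noncomputable def fbs (f : (I → Bool) → Bool) : ℝ :=
  sSup {s | ∃ x, s = fbsAt f x}

/-- Fractional `b`-block sensitivity of `f`. -/
noncomputable def fbsb (f : (I → Bool) → Bool) (b : Bool) : ℝ :=
  sSup {s | ∃ x, f x = b ∧ s = fbsAt f x}

/-- Certificate complexity of `f` at `x`. -/
noncomputable def CAt (f : (I → Bool) → Bool) (x : I → Bool) : ℕ :=
  sInf {k | ∃ S : Finset I, (∀ B, IsBlock f x B → (S ∩ B).Nonempty) ∧ k = S.card}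

/-- Certificate complexity of `f`. -/
noncomputable def Cm (f : (I → Bool) → Bool) : ℕ :=
  sSup {k | ∃ x, k = CAt f x}

/-- `b`-certificate complexity of `f`. -/
noncomputable def Cb (f : (I → Bool) → Bool) (b : Bool) : ℕ :=
  sSup {k | ∃ x, f x = b ∧ k = CAt f x}

/-- Fractional certificate complexity of `f` at `x`. -/
noncomputable def fCAt (f : (I → Bool) → Bool) (x : I → Bool) : ℝ :=
  sInf {s | ∃ w : I → ℝ, (∀ i, 0 ≤ w i ∧ w i ≤ 1) ∧
    (∀ B, IsBlock f x B → 1 ≤ ∑ i ∈ B, w i) ∧ s = ∑ i, w i}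

/-- Fractional certificate complexity of `f`. -/
noncomputable def fC (f : (I → Bool) → Bool) : ℝ :=
  sSup {s | ∃ x, s = fCAt f x}

/-- Composition `f ∘ g` of boolean functions. -/
def comp {J : Type*} [Fintype J] [DecidableEq J]
    (f : (I → Bool) → Bool) (g : (J → Bool) → Bool) :
    ((I × J) → Bool) → Bool :=
  fun x => f (fun i => g (fun j => x (i, j)))

/-- `k`-fold iterated composition `f^(k)` of an `n`-variate boolean function; the
variables of `f^(k)` are indexed by strings in `Fin k → Fin n`.  `f^(0)` is the
univariate identity function. -/
def iter {n : ℕ} (f : (Fin n → Bool) → Bool) :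
    (k : ℕ) → ((Fin k → Fin n) → Bool) → Bool
  | 0, x => x (fun i => i.elim0)
  | k + 1, x => f (fun i => iter f k (fun s => x (Fin.cons i s)))

/-- Spectral radius of a real square matrix: the maximum of `|μ|` over the complex
eigenvalues `μ` of the matrix. -/
noncomputable def specRad {m : Type*} [Fintype m] [DecidableEq m]
    (A : Matrix m m ℝ) : ℝ :=
  sSup {r | ∃ μ : ℂ, μ ∈ spectrum ℂ (A.map Complex.ofReal) ∧ r = ‖μ‖}

end BS

namespace BS

/-- The edges of the complete graph `K_s` on vertex set `Fin s`, represented as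
ordered pairs `(a, b)` with `a < b`. -/
abbrev Edge (s : ℕ) := {p : Fin s × Fin s // p.1 < p.2}

/-- The indicator of the star `H i`: the set of edges incident to vertex `i`. -/
def starInput (s : ℕ) (i : Fin s) : Edge s → Bool :=
  fun e => decide (e.val.1 = i ∨ e.val.2 = i)

/-- The function `g` of Theorem 5.2: on inputs indexed by the edges of `K_s`,
`g x = 1` iff `x` is the indicator of a star `H i`. -/
def starFn (s : ℕ) : (Edge s → Bool) → Bool :=
  fun x => decide (∃ i : Fin s, x = starInput s i)

end BS

/-!
The `s` stars of `K_s` are blocks of `g` at `0ⁿ` and every edge lies in exactly two of them, so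
weight `1/2` on each star is a fractional packing of value `s/2`.

At a zero `a` of `g`, each block `B` flips `a` into some star indicator `x^i`, and disjoint blocks
lead to distinct stars. Given four pairwise disjoint blocks with stars `i₀, i₁, i₂, i₃`, look at
the edge `e = i₀i₁`: the four flipped inputs read `1, 1, 0, 0` at `e`, so two of them differ from
`a e`, and both of the corresponding blocks must contain `e`.
-/

open Finset

namespace BS

section General

variable {I : Type*} [DecidableEq I]

theorem flipSet_empty (x : I → Bool) : flipSet x ∅ = x := by
  funext i
  simp [flipSet]

theorem not_isBlock_empty (f : (I → Bool) → Bool) (x : I → Bool) : ¬ IsBlock f x ∅ := by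
  simp [IsBlock, flipSet_empty]

theorem mem_of_flipSet_apply_ne {x : I → Bool} {B : Finset I} {i : I}
    (h : flipSet x B i ≠ x i) : i ∈ B := by
  by_contra hi
  simp [flipSet, hi] at h

theorem flipSet_injective (x : I → Bool) : Function.Injective (flipSet x) := by
  intro B B' h
  ext i
  have hi := congrFun h i
  by_cases hB : i ∈ B <;> by_cases hB' : i ∈ B' <;> simp_all [flipSet]

theorem bsAt_le {f : (I → Bool) → Bool} {x : I → Bool} {m : ℕ}
    (h : ∀ k (B : Fin k → Finset I), (∀ t, IsBlock f x (B t)) →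
      (∀ t t', t ≠ t' → Disjoint (B t) (B t')) → k ≤ m) :
    bsAt f x ≤ m :=
  csSup_le' fun _ ⟨B, hB, hd⟩ => h _ B hB hd

theorem bsb_le {f : (I → Bool) → Bool} {b : Bool} {m : ℕ}
    (h : ∀ x, f x = b → bsAt f x ≤ m) : bsb f b ≤ m :=
  csSup_le' fun _ ⟨x, hx, hk⟩ => hk ▸ h x hx

variable [Fintype I]

theorem flipSet_false_filter (y : I → Bool) :
    flipSet (fun _ => false) {i | y i = true} = y := by
  funext i
  cases h : y i <;> simp [flipSet, h]

/-- Blocks carrying weight are nonempty, so the total weight is at most the total load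
`∑ i, ∑ B ∋ i, lam B ≤ |I|`. -/
theorem sum_le_card_of_fractional_packing {f : (I → Bool) → Bool} {x : I → Bool}
    {lam : Finset I → ℝ} (h0 : ∀ B, 0 ≤ lam B) (hblock : ∀ B, ¬ IsBlock f x B → lam B = 0)
    (hload : ∀ i, ∑ B ∈ univ.filter (fun B : Finset I => i ∈ B), lam B ≤ 1) :
    ∑ B, lam B ≤ Fintype.card I := by
  have hweight : ∀ B, lam B ≤ #B * lam B := by
    intro B
    rcases B.eq_empty_or_nonempty with rfl | hB
    · simp [hblock ∅ (not_isBlock_empty f x)]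
    · exact le_mul_of_one_le_left (h0 B) (by exact_mod_cast hB.card_pos)
  have hcount : ∑ B, (#B : ℝ) * lam B =
      ∑ i, ∑ B ∈ univ.filter (fun B : Finset I => i ∈ B), lam B := by
    rw [Finset.sum_comm' (t' := univ) (s' := fun B => B)] <;> simp
  calc ∑ B, lam B ≤ ∑ B, (#B : ℝ) * lam B := sum_le_sum fun B _ => hweight B
    _ = ∑ i, ∑ B ∈ univ.filter (fun B : Finset I => i ∈ B), lam B := hcount
    _ ≤ ∑ _i : I, (1 : ℝ) := sum_le_sum fun i _ => hload i
    _ = Fintype.card I := by simp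

theorem le_fbsAt {f : (I → Bool) → Bool} {x : I → Bool}
    {lam : Finset I → ℝ} (h0 : ∀ B, 0 ≤ lam B) (hblock : ∀ B, ¬ IsBlock f x B → lam B = 0)
    (hload : ∀ i, ∑ B ∈ univ.filter (fun B : Finset I => i ∈ B), lam B ≤ 1) :
    ∑ B, lam B ≤ fbsAt f x := by
  refine le_csSup ⟨Fintype.card I, ?_⟩ ⟨lam, h0, hblock, hload, rfl⟩
  rintro _ ⟨lam', h0', hblock', hload', rfl⟩
  exact sum_le_card_of_fractional_packing h0' hblock' hload'

/-- A family of `|J|` blocks covering every index at most `c` times yields the fractional packing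
`lam B = #{j | B j = B} / c`. -/
theorem card_div_le_fbsAt {f : (I → Bool) → Bool} {x : I → Bool} {J : Type*} [Fintype J]
    (B : J → Finset I) (c : ℕ) (hB : ∀ j, IsBlock f x (B j))
    (hcover : ∀ i, #{j | i ∈ B j} ≤ c) :
    (Fintype.card J : ℝ) / c ≤ fbsAt f x := by
  set lam : Finset I → ℝ := fun C => (#{j | B j = C} : ℝ) / c
  have hsum : ∀ T : Finset (Finset I), ∑ C ∈ T, lam C = (#{j | B j ∈ T} : ℝ) / c := by
    intro T
    rw [← sum_div, ← Nat.cast_sum, sum_card_fiberwise_eq_card_filter]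
  have hblock : ∀ C, ¬ IsBlock f x C → lam C = 0 := by
    intro C hC
    have : ({j | B j = C} : Finset J) = ∅ :=
      filter_eq_empty_iff.mpr fun j _ hj => hC (hj ▸ hB j)
    simp [lam, this]
  have hload : ∀ i, ∑ C ∈ univ.filter (fun C : Finset I => i ∈ C), lam C ≤ 1 := by
    intro i
    rw [hsum]
    simp only [mem_filter, mem_univ, true_and]
    exact div_le_one_of_le₀ (by exact_mod_cast hcover i) c.cast_nonneg
  simpa [hsum] using le_fbsAt (fun C => by positivity) hblock hload

end General

section Star

variable {s : ℕ}

def starBlock (s : ℕ) (i : Fin s) : Finset (Edge s) :=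
  {e | starInput s i e = true}

theorem starFn_starInput (i : Fin s) : starFn s (starInput s i) = true :=
  decide_eq_true ⟨i, rfl⟩

theorem exists_edge_starInput_iff {i j : Fin s} (hij : i ≠ j) :
    ∃ e : Edge s, ∀ w, starInput s w e = true ↔ w = i ∨ w = j := by
  rcases hij.lt_or_gt with h | h
  · exact ⟨⟨(i, j), h⟩, fun w => by grind [starInput]⟩
  · exact ⟨⟨(j, i), h⟩, fun w => by grind [starInput]⟩

theorem starFn_false (hs : 2 ≤ s) : starFn s (fun _ => false) = false := by
  refine decide_eq_false fun ⟨i, hi⟩ => ?_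
  obtain ⟨j, hj⟩ := Fintype.exists_ne_of_one_lt_card (by simpa using hs.trans_lt' one_lt_two) i
  obtain ⟨e, he⟩ := exists_edge_starInput_iff hj.symm
  simpa [← hi] using (he i).mpr (Or.inl rfl)

theorem isBlock_starBlock (hs : 2 ≤ s) (i : Fin s) :
    IsBlock (starFn s) (fun _ => false) (starBlock s i) := by
  simp [IsBlock, starBlock, flipSet_false_filter, starFn_starInput, starFn_false hs]

theorem card_filter_mem_starBlock_le_two (e : Edge s) : #{i | e ∈ starBlock s i} ≤ 2 := by
  have : ({i | e ∈ starBlock s i} : Finset (Fin s)) ⊆ {e.val.1, e.val.2} := by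
    intro i
    simp only [starBlock, starInput, mem_filter, mem_univ, true_and, decide_eq_true_eq,
      mem_insert, mem_singleton]
    grind
  exact (card_le_card this).trans (card_insert_le _ _)

theorem half_le_fbsAt_starFn (hs : 2 ≤ s) :
    (s : ℝ) / 2 ≤ fbsAt (starFn s) (fun _ => false) := by
  simpa using card_div_le_fbsAt (starBlock s) 2 (isBlock_starBlock hs)
    card_filter_mem_starBlock_le_two

theorem exists_starInput_of_isBlock {a : Edge s → Bool} {B : Finset (Edge s)}
    (ha : starFn s a = false) (hB : IsBlock (starFn s) a B) :
    ∃ i, flipSet a B = starInput s i := by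
  rw [IsBlock, ha, ne_eq, Bool.not_eq_false] at hB
  exact of_decide_eq_true hB

theorem not_four_disjoint_blocks {a : Edge s → Bool} (ha : starFn s a = false)
    (B : Fin 4 → Finset (Edge s)) (hB : ∀ t, IsBlock (starFn s) a (B t))
    (hd : ∀ t t', t ≠ t' → Disjoint (B t) (B t')) : False := by
  choose c hc using fun t => exists_starInput_of_isBlock ha (hB t)
  have hc_inj : Function.Injective c := by
    intro t t' htt'
    have hBB : B t = B t' := flipSet_injective a (by rw [hc, hc, htt'])
    by_contra hne
    have hempty : B t = ∅ := disjoint_self.mp (hBB ▸ hd t t' hne)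
    exact not_isBlock_empty _ _ (hempty ▸ hB t)
  obtain ⟨e, he⟩ := exists_edge_starInput_iff (hc_inj.ne (by decide : (0 : Fin 4) ≠ 1))
  have hval : ∀ t, flipSet a (B t) e = decide (t = 0 ∨ t = 1) := by
    intro t
    rw [hc, Bool.eq_iff_iff, he, decide_eq_true_iff, hc_inj.eq_iff, hc_inj.eq_iff]
  have hno_common_flip : ∀ t t', t ≠ t' → flipSet a (B t) e = flipSet a (B t') e →
      flipSet a (B t) e ≠ a e → False := fun t t' hne hval' hflip =>
    disjoint_left.mp (hd t t' hne) (mem_of_flipSet_apply_ne hflip)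
      (mem_of_flipSet_apply_ne (hval' ▸ hflip))
  cases hae : a e
  · exact hno_common_flip 0 1 (by decide) (by simp [hval]) (by simp [hval, hae])
  · exact hno_common_flip 2 3 (by decide) (by simp [hval]) (by simp [hval, hae])

theorem bsAt_starFn_le_three {a : Edge s → Bool} (ha : starFn s a = false) :
    bsAt (starFn s) a ≤ 3 := by
  refine bsAt_le fun k B hB hd => ?_
  by_contra! hk
  exact not_four_disjoint_blocks ha (B ∘ Fin.castLE hk) (fun _ => hB _)
    fun t t' hne => hd _ _ ((Fin.castLE_injective hk).ne hne)

end Star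

end BS

open BS in
/-- For `s ≥ 2`, the function `g = starFn s` on the
`s(s-1)/2` edge variables of `K_s` satisfies `g(0) = 0`, `bs*_{0}(g) ≥ s/2`,
and `bs_a(g) ≤ 3` for every `a ∈ g⁻¹(0)` (i.e. `bs_0(g) ≤ 3`). -/
theorem starFn_properties (s : ℕ) (hs : 2 ≤ s) :
    starFn s (fun _ => false) = false ∧
    (s : ℝ) / 2 ≤ fbsAt (starFn s) (fun _ => false) ∧
    (∀ a : Edge s → Bool, starFn s a = false → bsAt (starFn s) a ≤ 3) ∧
    bsb (starFn s) false ≤ 3 :=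
  ⟨starFn_false hs, half_le_fbsAt_starFn hs, fun _ => bsAt_starFn_le_three,
    bsb_le fun _ => bsAt_starFn_le_three⟩
end

section
/- For any boolean function g : {0,1}^n → {0,1} and any input z ∈ {0,1}^n, the (non-adaptive) randomized certificate complexity and the fractional certificate complexity satisfy RC^z(g) ≤ C*_z(g) ≤ 2 · RC^z(g); in particular RC^z(g) = Θ(C*_z(g)) with universal constants. -/
open Filter

namespace BS

/-- The (non-adaptive) randomized certificate complexity of `g` at `z`: the infimum
of `Σ_i lam i` over `lam : I → [0,1]` such that for every `z'` with `g z' ≠ g z`, a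
verifier querying bit `i` independently with probability `lam i` and rejecting on
any observed disagreement with `z` rejects `z'` with probability at least `1/2`;
equivalently `∏_{i : z' i ≠ z i} (1 - lam i) ≤ 1/2`. -/
noncomputable def RCAt {I : Type*} [Fintype I] [DecidableEq I]
    (g : (I → Bool) → Bool) (z : I → Bool) : ℝ :=
  sInf {r | ∃ lam : I → ℝ, (∀ i, 0 ≤ lam i ∧ lam i ≤ 1) ∧
    (∀ z' : I → Bool, g z' ≠ g z →
      ∏ i ∈ Finset.univ.filter (fun i => z' i ≠ z i), (1 - lam i) ≤ 1 / 2) ∧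
    r = ∑ i, lam i}

end BS

/-!
If `z' = z ⊕ B` for a block `B`, the verifier accepts `z'` with probability
`∏_{i ∈ B} (1 - λ_i)`, and `1 - ∑_{i ∈ B} λ_i ≤ ∏_{i ∈ B} (1 - λ_i) ≤ exp (-∑_{i ∈ B} λ_i)`.
The upper bound and `exp (-1) < 1/2` show that every fractional certificate is a sound
query distribution. The lower bound shows that a sound `λ` puts mass at least `1/2` on every
block, so `min (2λ) 1` is a fractional certificate of weight at most `2 ∑ λ`.
-/

namespace BS

open Finset

section Inequalities

variable {ι : Type*}

theorem one_sub_sum_le_prod_one_sub {R : Type*} [CommRing R] [LinearOrder R]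
    [IsStrictOrderedRing R] (s : Finset ι) {t : ι → R} (h0 : ∀ i ∈ s, 0 ≤ t i)
    (h1 : ∀ i ∈ s, t i ≤ 1) : 1 - ∑ i ∈ s, t i ≤ ∏ i ∈ s, (1 - t i) := by
  induction s using Finset.cons_induction with
  | empty => simp
  | cons a s ha ih =>
    simp only [forall_mem_cons] at h0 h1
    rw [prod_cons, sum_cons]
    have hs : 0 ≤ ∑ i ∈ s, t i := sum_nonneg h0.2
    nlinarith [mul_le_mul_of_nonneg_left (ih h0.2 h1.2) (sub_nonneg.2 h1.1)]

theorem prod_one_sub_le_exp_neg_sum (s : Finset ι) {t : ι → ℝ} (h1 : ∀ i ∈ s, t i ≤ 1) :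
    ∏ i ∈ s, (1 - t i) ≤ Real.exp (-∑ i ∈ s, t i) := by
  rw [← sum_neg_distrib, Real.exp_sum]
  exact prod_le_prod (fun i hi => sub_nonneg.2 (h1 i hi)) fun i _ => Real.one_sub_le_exp_neg _

theorem prod_one_sub_le_half_of_one_le_sum (s : Finset ι) {t : ι → ℝ}
    (h1 : ∀ i ∈ s, t i ≤ 1) (hs : 1 ≤ ∑ i ∈ s, t i) : ∏ i ∈ s, (1 - t i) ≤ 1 / 2 :=
  calc ∏ i ∈ s, (1 - t i) ≤ Real.exp (-∑ i ∈ s, t i) := prod_one_sub_le_exp_neg_sum s h1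
    _ ≤ Real.exp (-1) := Real.exp_le_exp.2 (neg_le_neg hs)
    _ ≤ 1 / 2 := Real.exp_neg_one_lt_half.le

theorem one_le_sum_min_two_mul {R : Type*} [Field R] [LinearOrder R] [IsStrictOrderedRing R]
    (s : Finset ι) {t : ι → R} (h0 : ∀ i ∈ s, 0 ≤ t i) (hs : 1 / 2 ≤ ∑ i ∈ s, t i) :
    1 ≤ ∑ i ∈ s, min (2 * t i) 1 := by
  by_cases hsmall : ∀ i ∈ s, 2 * t i ≤ 1
  · rw [sum_congr rfl fun i hi => min_eq_left (hsmall i hi), ← mul_sum]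
    linarith
  · simp only [not_forall, not_le] at hsmall
    obtain ⟨i, hi, hti⟩ := hsmall
    calc (1 : R) = min (2 * t i) 1 := (min_eq_right hti.le).symm
      _ ≤ ∑ j ∈ s, min (2 * t j) 1 :=
        single_le_sum (f := fun j => min (2 * t j) 1)
          (fun j hj => le_min (by linarith [h0 j hj]) zero_le_one) hi

end Inequalities

section Blocks

variable {I : Type*} [DecidableEq I]

theorem filter_flipSet_ne [Fintype I] (x : I → Bool) (B : Finset I) :
    univ.filter (fun i => flipSet x B i ≠ x i) = B := by
  ext i
  by_cases h : i ∈ B <;> simp [flipSet, h]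

theorem flipSet_filter_ne [Fintype I] (x y : I → Bool) :
    flipSet x (univ.filter (fun i => y i ≠ x i)) = y := by
  funext i
  simp only [flipSet, mem_filter, mem_univ, true_and]
  cases x i <;> cases y i <;> simp

theorem IsBlock.nonempty {f : (I → Bool) → Bool} {x : I → Bool} {B : Finset I}
    (h : IsBlock f x B) : B.Nonempty := by
  rw [nonempty_iff_ne_empty]
  rintro rfl
  exact h (congrArg f (funext fun i => by simp [flipSet]))

/-- Inputs with a different value are exactly the `x ⊕ B` for blocks `B`, and `B` is then
their disagreement set with `x`. -/
theorem forall_ne_iff_forall_isBlock [Fintype I] {f : (I → Bool) → Bool} {x : I → Bool}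
    {P : Finset I → Prop} :
    (∀ y, f y ≠ f x → P (univ.filter fun i => y i ≠ x i)) ↔ ∀ B, IsBlock f x B → P B := by
  refine ⟨fun h B hB => ?_, fun h y hy => h _ ?_⟩
  · simpa only [filter_flipSet_ne] using h (flipSet x B) hB
  · rwa [IsBlock, flipSet_filter_ne]

end Blocks

section Complexities

variable {I : Type*} [Fintype I] [DecidableEq I] {f : (I → Bool) → Bool} {x : I → Bool}

theorem fCAt_le_sum {w : I → ℝ} (hw : ∀ i, 0 ≤ w i ∧ w i ≤ 1)
    (hB : ∀ B, IsBlock f x B → 1 ≤ ∑ i ∈ B, w i) : fCAt f x ≤ ∑ i, w i :=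
  csInf_le ⟨0, by rintro _ ⟨w, hw, -, rfl⟩; exact sum_nonneg fun i _ => (hw i).1⟩
    ⟨w, hw, hB, rfl⟩

theorem RCAt_le_sum {lam : I → ℝ} (hl : ∀ i, 0 ≤ lam i ∧ lam i ≤ 1)
    (hB : ∀ B, IsBlock f x B → ∏ i ∈ B, (1 - lam i) ≤ 1 / 2) : RCAt f x ≤ ∑ i, lam i :=
  csInf_le ⟨0, by rintro _ ⟨lam, hl, -, rfl⟩; exact sum_nonneg fun i _ => (hl i).1⟩
    ⟨lam, hl, forall_ne_iff_forall_isBlock.2 hB, rfl⟩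

theorem le_fCAt {r : ℝ} (h : ∀ w : I → ℝ, (∀ i, 0 ≤ w i ∧ w i ≤ 1) →
      (∀ B, IsBlock f x B → 1 ≤ ∑ i ∈ B, w i) → r ≤ ∑ i, w i) :
    r ≤ fCAt f x := by
  refine le_csInf ⟨_, fun _ => 1, fun _ => ⟨zero_le_one, le_rfl⟩, fun B hB => ?_, rfl⟩ ?_
  · simpa using (Nat.one_le_cast.2 hB.nonempty.card_pos : (1 : ℝ) ≤ B.card)
  · rintro _ ⟨w, hw, hB, rfl⟩
    exact h w hw hB

theorem le_RCAt {r : ℝ} (h : ∀ lam : I → ℝ, (∀ i, 0 ≤ lam i ∧ lam i ≤ 1) →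
      (∀ B, IsBlock f x B → ∏ i ∈ B, (1 - lam i) ≤ 1 / 2) → r ≤ ∑ i, lam i) :
    r ≤ RCAt f x := by
  refine le_csInf ⟨_, fun _ => 1, fun _ => ⟨zero_le_one, le_rfl⟩,
    (forall_ne_iff_forall_isBlock (P := fun B => ∏ i ∈ B, (1 - (1 : ℝ)) ≤ 1 / 2)).2
      fun B hB => ?_, rfl⟩ ?_
  · obtain ⟨i, hi⟩ := hB.nonempty
    rw [prod_eq_zero hi (sub_self 1)]
    norm_num
  · rintro _ ⟨lam, hl, hB, rfl⟩
    exact h lam hl (forall_ne_iff_forall_isBlock.1 hB)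

theorem fCAt_le_two_mul_sum {lam : I → ℝ} (hl : ∀ i, 0 ≤ lam i ∧ lam i ≤ 1)
    (hB : ∀ B, IsBlock f x B → ∏ i ∈ B, (1 - lam i) ≤ 1 / 2) :
    fCAt f x ≤ 2 * ∑ i, lam i := by
  have hw : ∀ i, 0 ≤ min (2 * lam i) 1 ∧ min (2 * lam i) 1 ≤ 1 := fun i =>
    ⟨le_min (by linarith [(hl i).1]) zero_le_one, min_le_right _ _⟩
  have hcert : ∀ B, IsBlock f x B → 1 ≤ ∑ i ∈ B, min (2 * lam i) 1 := by
    intro B hBlk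
    have hhalf : 1 / 2 ≤ ∑ i ∈ B, lam i := by
      linarith [hB B hBlk,
        one_sub_sum_le_prod_one_sub B (fun i _ => (hl i).1) (fun i _ => (hl i).2)]
    exact one_le_sum_min_two_mul B (fun i _ => (hl i).1) hhalf
  calc fCAt f x ≤ ∑ i, min (2 * lam i) 1 := fCAt_le_sum hw hcert
    _ ≤ ∑ i, 2 * lam i := sum_le_sum fun i _ => min_le_left _ _
    _ = 2 * ∑ i, lam i := (mul_sum _ _ _).symm

end Complexities

end BS

open BS in
/-- For any boolean function `g` and any input `z`,
`RC^z(g) ≤ C*_z(g) ≤ 2·RC^z(g)`; in particular the randomized certificate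
complexity and the fractional certificate complexity agree up to universal
constants. -/
theorem RC_eq_fC {n : ℕ} (g : (Fin n → Bool) → Bool) (z : Fin n → Bool) :
    RCAt g z ≤ fCAt g z ∧ fCAt g z ≤ 2 * RCAt g z := by
  constructor
  · exact le_fCAt fun w hw hB => RCAt_le_sum hw fun B hBlk =>
      prod_one_sub_le_half_of_one_le_sum B (fun i _ => (hw i).2) (hB B hBlk)
  · have hhalf : fCAt g z / 2 ≤ RCAt g z := le_RCAt fun lam hl hB => by
      linarith [fCAt_le_two_mul_sum hl hB]
    linarith
end
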